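/- arXiv:2603.04625 — 3 statements merged into one kernel-verified Lean document; each statement's English description precedes it below -/
import Mathlib

section
/- Fix data points x_1,…,x_n ∈ ℝ^d and centroids μ_1,…,μ_k ∈ ℝ^d with k ≥ 1. Then L_σ(μ) → J(μ) as σ → 0⁺; that is, for a fixed centroid configuration μ, the soft RBF loss converges to the K-Means distortion in the zero-temperature limit (no uniqueness of the nearest centroid is required). -/
open Filter

open Finset in
private lemma aux_ratio {k : ℕ} (hk : 1 ≤ k) (c : Fin k → ℝ) :
    Tendsto (fun t : ℝ =>
        (∑ j, Real.exp (-(c j) * t) * c j) / (∑ j, Real.exp (-(c j) * t)))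
      atTop (nhds (⨅ j, c j)) := by
  haveI : Nonempty (Fin k) := ⟨⟨0, hk⟩⟩
  set m := ⨅ j, c j with hm
  have hbdd : BddBelow (Set.range c) := (Set.finite_range c).bddBelow
  have hmle : ∀ j, m ≤ c j := fun j => ciInf_le hbdd j
  obtain ⟨j0, hj0⟩ := Finite.exists_min c
  have hmj0 : c j0 = m := le_antisymm (le_ciInf hj0) (hmle j0)
  have hterm : ∀ j, Tendsto (fun t : ℝ => Real.exp (-(c j - m) * t)) atTop
      (nhds (if c j = m then 1 else 0)) := by
    intro j
    by_cases h : c j = m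
    · simp [h]
    · have hpos : 0 < c j - m := sub_pos.2 (lt_of_le_of_ne (hmle j) (Ne.symm h))
      simp only [h, if_false]
      have h1 : Tendsto (fun t : ℝ => -(c j - m) * t) atTop atBot := by
        have := tendsto_id.const_mul_atTop_of_neg (neg_neg_iff_pos.2 hpos) (f := fun t : ℝ => t)
        simpa using this
      exact Real.tendsto_exp_atBot.comp h1
  set N : ℝ := ((Finset.univ.filter fun j => c j = m).card : ℝ) with hN
  have hNpos : 0 < N := by
    have : j0 ∈ Finset.univ.filter fun j => c j = m := by simp [hmj0]
    have h2 := Finset.card_pos.2 ⟨j0, this⟩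
    simp only [hN]
    exact_mod_cast h2
  have hden : Tendsto (fun t : ℝ => ∑ j, Real.exp (-(c j - m) * t)) atTop (nhds N) := by
    have := tendsto_finset_sum Finset.univ (fun j _ => hterm j)
    have hsum : (∑ j, if c j = m then (1:ℝ) else 0) = N := by
      simp [Finset.sum_boole, hN]
    rwa [hsum] at this
  have hnum : Tendsto (fun t : ℝ => ∑ j, Real.exp (-(c j - m) * t) * c j) atTop
      (nhds (N * m)) := by
    have := tendsto_finset_sum Finset.univ (fun j _ => (hterm j).mul_const (c j))
    have hsum : (∑ j, (if c j = m then (1:ℝ) else 0) * c j) = N * m := by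
      simp only [ite_mul, one_mul, zero_mul]
      rw [← Finset.sum_filter]
      rw [Finset.sum_congr rfl (fun j hj => (Finset.mem_filter.1 hj).2)]
      simp [hN, mul_comm]
    rwa [hsum] at this
  have hdiv := hnum.div hden (ne_of_gt hNpos)
  have hlim : N * m / N = m := by field_simp
  rw [hlim] at hdiv
  refine hdiv.congr fun t => ?_
  have key1 : (∑ j, Real.exp (-(c j - m) * t) * c j)
      = (∑ j, Real.exp (-(c j) * t) * c j) * Real.exp (m * t) := by
    rw [Finset.sum_mul]
    refine Finset.sum_congr rfl fun j _ => ?_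
    have h3 : -(c j - m) * t = -(c j) * t + m * t := by ring
    rw [h3, Real.exp_add]; ring
  have key2 : (∑ j, Real.exp (-(c j - m) * t))
      = (∑ j, Real.exp (-(c j) * t)) * Real.exp (m * t) := by
    rw [Finset.sum_mul]
    refine Finset.sum_congr rfl fun j _ => ?_
    have h3 : -(c j - m) * t = -(c j) * t + m * t := by ring
    rw [h3, Real.exp_add]
  simp only [Pi.div_apply]
  rw [key1, key2, mul_div_mul_right _ _ (Real.exp_ne_zero _)]

/-- For a fixed centroid configuration `μ`, the soft RBF loss
`L_σ(μ)` converges to the K-Means distortion `J(μ)` as `σ → 0⁺`. -/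
theorem softLoss_tendsto_distortion
    (d n k : ℕ) (hk : 1 ≤ k)
    (x : Fin n → EuclideanSpace ℝ (Fin d))
    (μ : Fin k → EuclideanSpace ℝ (Fin d)) :
    Tendsto
      (fun σ : ℝ => ∑ i, ∑ j,
        (Real.exp (-‖x i - μ j‖ ^ 2 / (2 * σ ^ 2)) /
          ∑ ℓ, Real.exp (-‖x i - μ ℓ‖ ^ 2 / (2 * σ ^ 2))) * ‖x i - μ j‖ ^ 2)
      (nhdsWithin 0 (Set.Ioi 0))
      (nhds (∑ i, ⨅ j : Fin k, ‖x i - μ j‖ ^ 2)) := by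
  have ht : Tendsto (fun σ : ℝ => (2 * σ ^ 2)⁻¹) (nhdsWithin 0 (Set.Ioi 0)) atTop := by
    apply tendsto_inv_nhdsGT_zero.comp
    rw [tendsto_nhdsWithin_iff]
    constructor
    · have : Tendsto (fun σ : ℝ => 2 * σ ^ 2) (nhds 0) (nhds 0) := by
        have hc : Continuous fun σ : ℝ => 2 * σ ^ 2 := by continuity
        simpa using hc.tendsto 0
      exact this.mono_left nhdsWithin_le_nhds
    · filter_upwards [self_mem_nhdsWithin] with σ hσ
      have : (0:ℝ) < σ := hσ
      have : (0:ℝ) < 2 * σ ^ 2 := by positivity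
      exact this
  apply tendsto_finset_sum
  intro i _
  have h := (aux_ratio hk (fun j => ‖x i - μ j‖ ^ 2)).comp ht
  refine h.congr fun σ => ?_
  simp only [Function.comp]
  have harg : ∀ a : ℝ, -a / (2 * σ ^ 2) = -a * (2 * σ ^ 2)⁻¹ := fun a => by ring
  simp only [harg, div_mul_eq_mul_div, ← Finset.sum_div]
end

section
/- Fix data points x_1,…,x_n ∈ ℝ^d and k ≥ 1. Let σ_m > 0 be any sequence and let μ^{(m)} be a sequence of centroid configurations in (ℝ^d)^k converging to μ. Then liminf_{m→∞} L_{σ_m}(μ^{(m)}) ≥ J(μ) (the Γ-liminf inequality for the soft RBF loss against the K-Means distortion). -/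
open Filter

/-- The soft RBF loss `L_σ(μ)`. -/
noncomputable def softLoss (d n k : ℕ) (x : Fin n → EuclideanSpace ℝ (Fin d))
    (σ : ℝ) (μ : Fin k → EuclideanSpace ℝ (Fin d)) : ℝ :=
  ∑ i, ∑ j,
    (Real.exp (-‖x i - μ j‖ ^ 2 / (2 * σ ^ 2)) /
      ∑ ℓ, Real.exp (-‖x i - μ ℓ‖ ^ 2 / (2 * σ ^ 2))) * ‖x i - μ j‖ ^ 2

/-- The K-Means distortion `J(μ)`. -/
noncomputable def distortion (d n k : ℕ) (x : Fin n → EuclideanSpace ℝ (Fin d))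
    (μ : Fin k → EuclideanSpace ℝ (Fin d)) : ℝ :=
  ∑ i, ⨅ j : Fin k, ‖x i - μ j‖ ^ 2

lemma distortion_le_softLoss (d n k : ℕ) (hk : 1 ≤ k)
    (x : Fin n → EuclideanSpace ℝ (Fin d)) (σ : ℝ)
    (μ : Fin k → EuclideanSpace ℝ (Fin d)) :
    distortion d n k x μ ≤ softLoss d n k x σ μ := by
  have hne : Nonempty (Fin k) := Fin.pos_iff_nonempty.mp hk
  unfold distortion softLoss
  refine Finset.sum_le_sum fun i _ => ?_
  set S : ℝ := ∑ ℓ, Real.exp (-‖x i - μ ℓ‖ ^ 2 / (2 * σ ^ 2)) with hS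
  have hSpos : 0 < S :=
    Finset.sum_pos (fun ℓ _ => Real.exp_pos _) Finset.univ_nonempty
  have hsum1 : ∑ j, Real.exp (-‖x i - μ j‖ ^ 2 / (2 * σ ^ 2)) / S = 1 := by
    rw [← Finset.sum_div, ← hS, div_self hSpos.ne']
  calc ⨅ j : Fin k, ‖x i - μ j‖ ^ 2
      = ∑ j, (Real.exp (-‖x i - μ j‖ ^ 2 / (2 * σ ^ 2)) / S) *
          (⨅ j : Fin k, ‖x i - μ j‖ ^ 2) := by
        rw [← Finset.sum_mul, hsum1, one_mul]
    _ ≤ ∑ j, (Real.exp (-‖x i - μ j‖ ^ 2 / (2 * σ ^ 2)) / S) * ‖x i - μ j‖ ^ 2 := by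
        refine Finset.sum_le_sum fun j _ => ?_
        refine mul_le_mul_of_nonneg_left ?_ (div_nonneg (Real.exp_pos _).le hSpos.le)
        exact ciInf_le (Finite.bddBelow_range _) j

set_option maxHeartbeats 1000000 in
lemma softLoss_le_sum (d n k : ℕ) (hk : 1 ≤ k)
    (x : Fin n → EuclideanSpace ℝ (Fin d)) (σ : ℝ)
    (μ : Fin k → EuclideanSpace ℝ (Fin d)) :
    softLoss d n k x σ μ ≤ ∑ i, ∑ j, ‖x i - μ j‖ ^ 2 := by
  have hne : Nonempty (Fin k) := Fin.pos_iff_nonempty.mp hk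
  unfold softLoss
  refine Finset.sum_le_sum fun i _ => Finset.sum_le_sum fun j _ => ?_
  have hSpos : (0:ℝ) < ∑ ℓ, Real.exp (-‖x i - μ ℓ‖ ^ 2 / (2 * σ ^ 2)) :=
    Finset.sum_pos (fun ℓ _ => Real.exp_pos _) Finset.univ_nonempty
  have hle : Real.exp (-‖x i - μ j‖ ^ 2 / (2 * σ ^ 2)) /
      (∑ ℓ, Real.exp (-‖x i - μ ℓ‖ ^ 2 / (2 * σ ^ 2))) ≤ 1 := by
    rw [div_le_one hSpos]
    exact Finset.single_le_sum (f := fun ℓ => Real.exp (-‖x i - μ ℓ‖ ^ 2 / (2 * σ ^ 2)))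
      (fun ℓ _ => (Real.exp_pos _).le) (Finset.mem_univ j)
  have h2 : (0:ℝ) ≤ ‖x i - μ j‖ ^ 2 := sq_nonneg _
  nlinarith [mul_le_mul_of_nonneg_right hle h2]

/-- Γ-liminf inequality: for any sequence `σ_m > 0` and any sequence
of centroid configurations `μ^{(m)} → μ`, one has
`liminf_{m→∞} L_{σ_m}(μ^{(m)}) ≥ J(μ)`. -/
theorem softLoss_gamma_liminf
    (d n k : ℕ) (hk : 1 ≤ k)
    (x : Fin n → EuclideanSpace ℝ (Fin d))
    (σ : ℕ → ℝ) (hσ : ∀ m, 0 < σ m)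
    (μseq : ℕ → Fin k → EuclideanSpace ℝ (Fin d))
    (μ : Fin k → EuclideanSpace ℝ (Fin d))
    (hconv : Tendsto μseq atTop (nhds μ)) :
    distortion d n k x μ ≤ liminf (fun m => softLoss d n k x (σ m) (μseq m)) atTop := by
  have hne : Nonempty (Fin k) := Fin.pos_iff_nonempty.mp hk
  -- distortion ∘ μseq tends to distortion μ
  have htend : Tendsto (fun m => distortion d n k x (μseq m)) atTop
      (nhds (distortion d n k x μ)) := by
    unfold distortion
    refine tendsto_finset_sum _ fun i _ => ?_
    have := Filter.Tendsto.finset_inf'_nhds_apply (s := (Finset.univ : Finset (Fin k)))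
      (f := fun j m => ‖x i - μseq m j‖ ^ 2) (g := fun j => ‖x i - μ j‖ ^ 2)
      (l := atTop) Finset.univ_nonempty (fun j _ => by
        have hj : Tendsto (fun m => μseq m j) atTop (nhds (μ j)) :=
          ((continuous_apply j).tendsto μ).comp hconv
        exact ((continuous_const.sub continuous_id).norm.pow 2).continuousAt.tendsto.comp hj)
    simpa only [Finset.inf'_univ_eq_ciInf] using this
  have heq : distortion d n k x μ =
      liminf (fun m => distortion d n k x (μseq m)) atTop := (htend.liminf_eq).symm
  rw [heq]
  refine liminf_le_liminf (Eventually.of_forall fun m =>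
    distortion_le_softLoss d n k hk x (σ m) (μseq m)) ?_ ?_
  · exact htend.isBoundedUnder_ge
  · refine IsBoundedUnder.isCoboundedUnder_ge ?_
    have hB : Tendsto (fun m => ∑ i, ∑ j, ‖x i - μseq m j‖ ^ 2) atTop
        (nhds (∑ i, ∑ j, ‖x i - μ j‖ ^ 2)) := by
      refine tendsto_finset_sum _ fun i _ => tendsto_finset_sum _ fun j _ => ?_
      have hj : Tendsto (fun m => μseq m j) atTop (nhds (μ j)) :=
        ((continuous_apply j).tendsto μ).comp hconv
      exact ((continuous_const.sub continuous_id).norm.pow 2).continuousAt.tendsto.comp hj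
    exact hB.isBoundedUnder_le.mono_le (Eventually.of_forall fun m =>
      softLoss_le_sum d n k hk x (σ m) (μseq m))
end

section
/- Let x_1,…,x_n ∈ ℝ^d and μ_1,…,μ_k ∈ ℝ^d (k ≥ 1), and suppose every point has a unique nearest centroid: for each i there is j(i) with ‖x_i − μ_{j(i)}‖ < ‖x_i − μ_ℓ‖ for all ℓ ≠ j(i). Let γ_i = d_{i,(2)} − d_{i,(1)} be the margin (second-smallest minus smallest distance from x_i to the centroids) and γ_min = min_i γ_i > 0. Then for every σ > 0, every i, and every j, the softmax responsibilities satisfy |r_{ij}(σ) − 1_{\{j = j(i)\}}| ≤ (k−1)·exp(−γ_min²/(2σ²)). -/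
/-!
Since `γ ≤ ‖x - μ_ℓ‖ - ‖x - μ_{j(i)}‖` with both terms nonnegative, squaring gives
`‖x - μ_ℓ‖² ≥ ‖x - μ_{j(i)}‖² + γ²`, so every competing Gaussian weight is at most
`exp(-γ²/(2σ²))` times the winning one. For any nonnegative weights dominated in this way by a
positive weight `a j₀`, the normalised weight of `j₀` misses `1` by at most `(k - 1)·E` and each
other normalised weight is at most `E`.
-/

open Finset

theorem Real.exp_neg_sq_div_le_of_add_le {r R γ t : ℝ} (hr : 0 ≤ r) (hγ : 0 ≤ γ)
    (hrR : r + γ ≤ R) (ht : 0 ≤ t) :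
    Real.exp (-R ^ 2 / t) ≤ Real.exp (-r ^ 2 / t) * Real.exp (-γ ^ 2 / t) := by
  rw [← Real.exp_add, Real.exp_le_exp, ← add_div]
  gcongr
  nlinarith

section NormalizedWeights

variable {ι : Type*} [Fintype ι] {a : ι → ℝ} {j₀ : ι} {E : ℝ}

theorem sum_erase_le_card_sub_one_mul [DecidableEq ι] (hdom : ∀ ℓ, ℓ ≠ j₀ → a ℓ ≤ a j₀ * E) :
    ∑ ℓ ∈ univ.erase j₀, a ℓ ≤ ((Fintype.card ι : ℝ) - 1) * (a j₀ * E) := by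
  have hcard : ((#(univ.erase j₀) : ℕ) : ℝ) + 1 = Fintype.card ι := by
    exact_mod_cast card_erase_add_one (mem_univ j₀)
  calc ∑ ℓ ∈ univ.erase j₀, a ℓ ≤ #(univ.erase j₀) • (a j₀ * E) :=
        sum_le_card_nsmul _ _ _ fun ℓ hℓ => hdom ℓ (ne_of_mem_erase hℓ)
    _ = ((Fintype.card ι : ℝ) - 1) * (a j₀ * E) := by rw [nsmul_eq_mul]; congr 1; linarith

theorem one_sub_div_sum_le (ha : ∀ ℓ, 0 ≤ a ℓ) (ha₀ : 0 < a j₀) (hE : 0 ≤ E)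
    (hdom : ∀ ℓ, ℓ ≠ j₀ → a ℓ ≤ a j₀ * E) :
    1 - a j₀ / ∑ ℓ, a ℓ ≤ ((Fintype.card ι : ℝ) - 1) * E := by
  classical
  have hS : a j₀ ≤ ∑ ℓ, a ℓ := single_le_sum (fun ℓ _ => ha ℓ) (mem_univ j₀)
  have hSpos : 0 < ∑ ℓ, a ℓ := ha₀.trans_le hS
  have hcard : (0 : ℝ) ≤ Fintype.card ι - 1 := by
    have : (1 : ℝ) ≤ Fintype.card ι := by exact_mod_cast Fintype.card_pos_iff.2 ⟨j₀⟩
    linarith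
  have hrest : ∑ ℓ, a ℓ - a j₀ = ∑ ℓ ∈ univ.erase j₀, a ℓ := by
    rw [← sum_erase_add _ _ (mem_univ j₀), add_sub_cancel_right]
  rw [one_sub_div hSpos.ne', hrest, div_le_iff₀ hSpos]
  calc ∑ ℓ ∈ univ.erase j₀, a ℓ ≤ ((Fintype.card ι : ℝ) - 1) * (a j₀ * E) :=
        sum_erase_le_card_sub_one_mul hdom
    _ ≤ ((Fintype.card ι : ℝ) - 1) * E * ∑ ℓ, a ℓ := by
        rw [mul_assoc, mul_comm (a j₀)]; gcongr

theorem div_sum_le_of_le_mul (ha : ∀ ℓ, 0 ≤ a ℓ) (ha₀ : 0 < a j₀) (hE : 0 ≤ E)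
    {j : ι} (hdom : a j ≤ a j₀ * E) : a j / ∑ ℓ, a ℓ ≤ E := by
  have hS : a j₀ ≤ ∑ ℓ, a ℓ := single_le_sum (fun ℓ _ => ha ℓ) (mem_univ j₀)
  rw [div_le_iff₀ (ha₀.trans_le hS)]
  calc a j ≤ a j₀ * E := hdom
    _ ≤ E * ∑ ℓ, a ℓ := by rw [mul_comm]; gcongr

theorem abs_div_sum_sub_ite_le [DecidableEq ι] (ha : ∀ ℓ, 0 ≤ a ℓ) (ha₀ : 0 < a j₀) (hE : 0 ≤ E)
    (hdom : ∀ ℓ, ℓ ≠ j₀ → a ℓ ≤ a j₀ * E) (j : ι) :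
    |a j / ∑ ℓ, a ℓ - if j = j₀ then 1 else 0| ≤ ((Fintype.card ι : ℝ) - 1) * E := by
  have hS : a j₀ ≤ ∑ ℓ, a ℓ := single_le_sum (fun ℓ _ => ha ℓ) (mem_univ j₀)
  by_cases hj : j = j₀
  · subst hj
    have hle : a j / ∑ ℓ, a ℓ ≤ 1 := div_le_one_of_le₀ hS (sum_nonneg fun ℓ _ => ha ℓ)
    rw [if_pos rfl, abs_sub_comm, abs_of_nonneg (sub_nonneg.2 hle)]
    exact one_sub_div_sum_le ha ha₀ hE hdom
  · have hcard : (1 : ℝ) ≤ Fintype.card ι - 1 := by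
      have : 2 ≤ Fintype.card ι := Fintype.one_lt_card_iff.2 ⟨j, j₀, hj⟩
      have : (2 : ℝ) ≤ Fintype.card ι := by exact_mod_cast this
      linarith
    rw [if_neg hj, sub_zero, abs_of_nonneg (div_nonneg (ha j) (sum_nonneg fun ℓ _ => ha ℓ))]
    calc a j / ∑ ℓ, a ℓ ≤ E := div_sum_le_of_le_mul ha ha₀ hE (hdom j hj)
      _ ≤ ((Fintype.card ι : ℝ) - 1) * E := le_mul_of_one_le_left hE hcard

end NormalizedWeights

theorem softmax_responsibility_deviation_bound_general
    (d n k : ℕ)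
    (x : Fin n → EuclideanSpace ℝ (Fin d))
    (μ : Fin k → EuclideanSpace ℝ (Fin d))
    (jmap : Fin n → Fin k)
    (γmin : ℝ) (hγ : 0 < γmin)
    (hmargin : ∀ i, ∀ ℓ, ℓ ≠ jmap i → γmin ≤ ‖x i - μ ℓ‖ - ‖x i - μ (jmap i)‖)
    (σ : ℝ) (i : Fin n) (j : Fin k) :
    |Real.exp (-‖x i - μ j‖ ^ 2 / (2 * σ ^ 2)) /
        (∑ ℓ, Real.exp (-‖x i - μ ℓ‖ ^ 2 / (2 * σ ^ 2)))
      - (if j = jmap i then (1 : ℝ) else 0)|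
      ≤ ((k : ℝ) - 1) * Real.exp (-γmin ^ 2 / (2 * σ ^ 2)) := by
  have hdom : ∀ ℓ, ℓ ≠ jmap i → Real.exp (-‖x i - μ ℓ‖ ^ 2 / (2 * σ ^ 2)) ≤
      Real.exp (-‖x i - μ (jmap i)‖ ^ 2 / (2 * σ ^ 2)) * Real.exp (-γmin ^ 2 / (2 * σ ^ 2)) :=
    fun ℓ hℓ => Real.exp_neg_sq_div_le_of_add_le (norm_nonneg _) hγ.le
      (by linarith [hmargin i ℓ hℓ]) (by positivity)
  simpa only [Fintype.card_fin] using
    abs_div_sum_sub_ite_le (fun _ => (Real.exp_pos _).le) (Real.exp_pos _) (Real.exp_pos _).le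
      hdom j

/-- If every point has a unique nearest centroid and all margins
(second-smallest minus smallest centroid distance) are at least `γ_min > 0`, then
for every `σ > 0` the softmax responsibilities satisfy
`|r_{ij}(σ) − 1_{j = j(i)}| ≤ (k−1)·exp(−γ_min²/(2σ²))`. -/
theorem softmax_responsibility_deviation_bound
    (d n k : ℕ) (hk : 1 ≤ k)
    (x : Fin n → EuclideanSpace ℝ (Fin d))
    (μ : Fin k → EuclideanSpace ℝ (Fin d))
    (jmap : Fin n → Fin k)
    (hnear : ∀ i, ∀ ℓ, ℓ ≠ jmap i → ‖x i - μ (jmap i)‖ < ‖x i - μ ℓ‖)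
    (γmin : ℝ) (hγ : 0 < γmin)
    (hmargin : ∀ i, ∀ ℓ, ℓ ≠ jmap i → γmin ≤ ‖x i - μ ℓ‖ - ‖x i - μ (jmap i)‖)
    (σ : ℝ) (hσ : 0 < σ) (i : Fin n) (j : Fin k) :
    |Real.exp (-‖x i - μ j‖ ^ 2 / (2 * σ ^ 2)) /
        (∑ ℓ, Real.exp (-‖x i - μ ℓ‖ ^ 2 / (2 * σ ^ 2)))
      - (if j = jmap i then (1 : ℝ) else 0)|
      ≤ ((k : ℝ) - 1) * Real.exp (-γmin ^ 2 / (2 * σ ^ 2)) :=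
  softmax_responsibility_deviation_bound_general d n k x μ jmap γmin hγ hmargin σ i j
end
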